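/- arXiv:2409.03692 — 3 statements merged into one kernel-verified Lean document; each statement's English description precedes it below -/
import Mathlib

section
/- Mirror theorem for the CR3BP: let (x, y, z) : ℝ → ℝ³ be a CR3BP solution defined for all time with r₁, r₂ positive throughout, and suppose it crosses the x–z plane perpendicularly at two times t = 0 and t = T/2 with T > 0, i.e. y(0) = ẋ(0) = ż(0) = 0 and y(T/2) = ẋ(T/2) = ż(T/2) = 0. Then the solution is periodic with period T: (x, y, z)(t + T) = (x, y, z)(t) and (ẋ, ẏ, ż)(t + T) = (ẋ, ẏ, ż)(t) for all t ∈ ℝ. -/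
/-!
The CR3BP is reversible: the linear involution `R (x, y, z, ẋ, ẏ, ż) = (x, -y, z, -ẋ, ẏ, -ż)`
satisfies `F ∘ R = -(R ∘ F)` for the first-order vector field `F`, so for every solution `γ`
the curve `t ↦ R (γ (2c - t))` is again a solution. A perpendicular crossing of the `x`–`z`
plane at time `c` says `R (γ c) = γ c`, and uniqueness of solutions then gives the mirror
symmetry `R (γ (2c - t)) = γ t`. Composing the mirror symmetries about `0` and `T / 2`
translates time by `T`, and `R ∘ R = id`.
-/

/-- Distance from the satellite at position `(x, y, z)` to the Earth at `(-μ, 0, 0)`. -/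
noncomputable def r1 (μ x y z : ℝ) : ℝ := Real.sqrt ((x + μ) ^ 2 + y ^ 2 + z ^ 2)

/-- Distance from the satellite at position `(x, y, z)` to the Moon at `(1 - μ, 0, 0)`. -/
noncomputable def r2 (μ x y z : ℝ) : ℝ := Real.sqrt ((x - (1 - μ)) ^ 2 + y ^ 2 + z ^ 2)

/-- A twice-differentiable curve `(x, y, z) : I → ℝ³` is a solution of the circular
restricted three-body problem (CR3BP) in rotating barycentric coordinates with mass
parameter `μ` if it satisfies the CR3BP equations of motion on `I`, with both distances
to the primaries positive throughout. -/
structure IsCR3BPSolution (μ : ℝ) (I : Set ℝ) (x y z : ℝ → ℝ) : Prop where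
  diff_x : ∀ t ∈ I, DifferentiableAt ℝ x t
  diff_y : ∀ t ∈ I, DifferentiableAt ℝ y t
  diff_z : ∀ t ∈ I, DifferentiableAt ℝ z t
  diff_x' : ∀ t ∈ I, DifferentiableAt ℝ (deriv x) t
  diff_y' : ∀ t ∈ I, DifferentiableAt ℝ (deriv y) t
  diff_z' : ∀ t ∈ I, DifferentiableAt ℝ (deriv z) t
  r1_pos : ∀ t ∈ I, 0 < r1 μ (x t) (y t) (z t)
  r2_pos : ∀ t ∈ I, 0 < r2 μ (x t) (y t) (z t)
  eq_x : ∀ t ∈ I, deriv (deriv x) t =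
    2 * deriv y t + x t - (1 - μ) * (x t + μ) / (r1 μ (x t) (y t) (z t)) ^ 3
      - μ * (x t - (1 - μ)) / (r2 μ (x t) (y t) (z t)) ^ 3
  eq_y : ∀ t ∈ I, deriv (deriv y) t =
    -2 * deriv x t + y t - (1 - μ) * y t / (r1 μ (x t) (y t) (z t)) ^ 3
      - μ * y t / (r2 μ (x t) (y t) (z t)) ^ 3
  eq_z : ∀ t ∈ I, deriv (deriv z) t =
    -((1 - μ) * z t) / (r1 μ (x t) (y t) (z t)) ^ 3
      - μ * z t / (r2 μ (x t) (y t) (z t)) ^ 3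

open Topology

section Reversible

variable {E : Type*} [NormedAddCommGroup E] [NormedSpace ℝ E] {F : E → E} {f : ℝ → E}

/-- Only `f` has to stay in `Ω`: near a time where `f = g`, both curves lie in the neighbourhood
of `f t₁` on which `F` is Lipschitz. -/
theorem ODE_solution_unique_univ_of_contDiffAt {Ω : Set E} (hF : ∀ p ∈ Ω, ContDiffAt ℝ 1 F p)
    {g : ℝ → E} (hf : ∀ t, HasDerivAt f (F (f t)) t) (hfΩ : ∀ t, f t ∈ Ω)
    (hg : ∀ t, HasDerivAt g (F (g t)) t) {t₀ : ℝ} (heq : f t₀ = g t₀) : f = g := by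
  have hfc : Continuous f := continuous_iff_continuousAt.mpr fun t => (hf t).continuousAt
  have hgc : Continuous g := continuous_iff_continuousAt.mpr fun t => (hg t).continuousAt
  have hopen : IsOpen {t | f t = g t} := by
    refine isOpen_iff_mem_nhds.mpr fun t₁ (ht₁ : f t₁ = g t₁) => ?_
    obtain ⟨K, U, hU, hL⟩ := (hF _ (hfΩ t₁)).exists_lipschitzOnWith
    have hfU : ∀ᶠ t in 𝓝 t₁, f t ∈ U := hfc.continuousAt.preimage_mem_nhds hU
    have hgU : ∀ᶠ t in 𝓝 t₁, g t ∈ U := hgc.continuousAt.preimage_mem_nhds (ht₁ ▸ hU)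
    exact ODE_solution_unique_of_eventually (v := fun _ => F) (s := fun _ => U)
      (.of_forall fun _ => hL) (hfU.mono fun t ht => ⟨hf t, ht⟩)
      (hgU.mono fun t ht => ⟨hg t, ht⟩) ht₁
  have huniv : {t | f t = g t} = Set.univ :=
    IsClopen.eq_univ ⟨isClosed_eq hfc hgc, hopen⟩ ⟨t₀, heq⟩
  exact funext fun t => Set.eq_univ_iff_forall.mp huniv t

variable (R : E →L[ℝ] E)

theorem hasDerivAt_reflect_comp_time_reversal (hFR : ∀ p, F (R p) = -R (F p))
    (hf : ∀ t, HasDerivAt f (F (f t)) t) (c t : ℝ) :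
    HasDerivAt (fun s => R (f (2 * c - s))) (F (R (f (2 * c - t)))) t := by
  have hrev : HasDerivAt (fun s : ℝ => 2 * c - s) (-1) t := (hasDerivAt_id t).const_sub _
  rw [hFR, ← map_neg, ← neg_one_smul ℝ (F _)]
  exact R.hasFDerivAt.comp_hasDerivAt t ((hf (2 * c - t)).scomp t hrev)

theorem reflect_apply_two_mul_sub {Ω : Set E} (hF : ∀ p ∈ Ω, ContDiffAt ℝ 1 F p)
    (hFR : ∀ p, F (R p) = -R (F p)) (hf : ∀ t, HasDerivAt f (F (f t)) t)
    (hfΩ : ∀ t, f t ∈ Ω) {c : ℝ} (hc : R (f c) = f c) (t : ℝ) :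
    R (f (2 * c - t)) = f t := by
  refine (congrFun (ODE_solution_unique_univ_of_contDiffAt hF hf hfΩ
    (hasDerivAt_reflect_comp_time_reversal R hFR hf c) (t₀ := c) ?_) t).symm
  simpa [two_mul] using hc.symm

theorem periodic_of_reflect_eq_of_reflect_eq {Ω : Set E} (hF : ∀ p ∈ Ω, ContDiffAt ℝ 1 F p)
    (hFR : ∀ p, F (R p) = -R (F p)) (hR : ∀ p, R (R p) = p)
    (hf : ∀ t, HasDerivAt f (F (f t)) t) (hfΩ : ∀ t, f t ∈ Ω) {a b : ℝ}
    (ha : R (f a) = f a) (hb : R (f b) = f b) : Function.Periodic f (2 * (b - a)) := by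
  have hsymm {c : ℝ} (hc : R (f c) = f c) (t : ℝ) : R (f (2 * c - t)) = f t :=
    reflect_apply_two_mul_sub R hF hFR hf hfΩ hc t
  intro t
  calc f (t + 2 * (b - a)) = R (f (2 * b - (t + 2 * (b - a)))) := (hsymm hb _).symm
    _ = R (f (2 * a - t)) := by ring_nf
    _ = R (R (f (2 * a - (2 * a - t)))) := by rw [hsymm ha (2 * a - t)]
    _ = f t := by rw [sub_sub_cancel, hR]

end Reversible

namespace CR3BP

abbrev PhaseSpace := ℝ × ℝ × ℝ × ℝ × ℝ × ℝ

noncomputable def vectorField (μ : ℝ) (p : PhaseSpace) : PhaseSpace :=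
  (p.2.2.2.1, p.2.2.2.2.1, p.2.2.2.2.2,
   2 * p.2.2.2.2.1 + p.1 - (1 - μ) * (p.1 + μ) / (r1 μ p.1 p.2.1 p.2.2.1) ^ 3
     - μ * (p.1 - (1 - μ)) / (r2 μ p.1 p.2.1 p.2.2.1) ^ 3,
   -2 * p.2.2.2.1 + p.2.1 - (1 - μ) * p.2.1 / (r1 μ p.1 p.2.1 p.2.2.1) ^ 3
     - μ * p.2.1 / (r2 μ p.1 p.2.1 p.2.2.1) ^ 3,
   -((1 - μ) * p.2.2.1) / (r1 μ p.1 p.2.1 p.2.2.1) ^ 3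
     - μ * p.2.2.1 / (r2 μ p.1 p.2.1 p.2.2.1) ^ 3)

def awayFromPrimaries (μ : ℝ) : Set PhaseSpace :=
  {p | 0 < r1 μ p.1 p.2.1 p.2.2.1 ∧ 0 < r2 μ p.1 p.2.1 p.2.2.1}

def mirror : PhaseSpace →L[ℝ] PhaseSpace :=
  (ContinuousLinearMap.id ℝ ℝ).prodMap <| (-ContinuousLinearMap.id ℝ ℝ).prodMap <|
    (ContinuousLinearMap.id ℝ ℝ).prodMap <| (-ContinuousLinearMap.id ℝ ℝ).prodMap <|
      (ContinuousLinearMap.id ℝ ℝ).prodMap (-ContinuousLinearMap.id ℝ ℝ)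

@[simp]
theorem mirror_apply (p : PhaseSpace) :
    mirror p = (p.1, -p.2.1, p.2.2.1, -p.2.2.2.1, p.2.2.2.2.1, -p.2.2.2.2.2) :=
  rfl

theorem mirror_mirror (p : PhaseSpace) : mirror (mirror p) = p := by
  simp

theorem r1_neg (μ x y z : ℝ) : r1 μ x (-y) z = r1 μ x y z := by simp [r1]

theorem r2_neg (μ x y z : ℝ) : r2 μ x (-y) z = r2 μ x y z := by simp [r2]

theorem vectorField_mirror (μ : ℝ) (p : PhaseSpace) :
    vectorField μ (mirror p) = -mirror (vectorField μ p) := by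
  simp only [vectorField, mirror_apply, r1_neg, r2_neg, Prod.neg_mk, neg_neg, Prod.mk.injEq,
    true_and, and_true]
  ring

theorem contDiffAt_r1 (μ : ℝ) {p : PhaseSpace} (h : r1 μ p.1 p.2.1 p.2.2.1 ≠ 0) :
    ContDiffAt ℝ 1 (fun q : PhaseSpace => r1 μ q.1 q.2.1 q.2.2.1) p := by
  unfold r1 at *
  fun_prop (disch := exact fun h' => h (by rw [h', Real.sqrt_zero]))

theorem contDiffAt_r2 (μ : ℝ) {p : PhaseSpace} (h : r2 μ p.1 p.2.1 p.2.2.1 ≠ 0) :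
    ContDiffAt ℝ 1 (fun q : PhaseSpace => r2 μ q.1 q.2.1 q.2.2.1) p := by
  unfold r2 at *
  fun_prop (disch := exact fun h' => h (by rw [h', Real.sqrt_zero]))

theorem contDiffAt_vectorField (μ : ℝ) {p : PhaseSpace} (hp : p ∈ awayFromPrimaries μ) :
    ContDiffAt ℝ 1 (vectorField μ) p := by
  have h1 := contDiffAt_r1 μ hp.1.ne'
  have h2 := contDiffAt_r2 μ hp.2.ne'
  have h1' := pow_ne_zero 3 hp.1.ne'
  have h2' := pow_ne_zero 3 hp.2.ne'
  unfold vectorField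
  fun_prop (disch := assumption)

noncomputable def phaseCurve (x y z : ℝ → ℝ) (t : ℝ) : PhaseSpace :=
  (x t, y t, z t, deriv x t, deriv y t, deriv z t)

end CR3BP

open CR3BP

namespace IsCR3BPSolution

variable {μ : ℝ} {x y z : ℝ → ℝ}

theorem phaseCurve_mem (h : IsCR3BPSolution μ Set.univ x y z) (t : ℝ) :
    phaseCurve x y z t ∈ awayFromPrimaries μ :=
  ⟨h.r1_pos t trivial, h.r2_pos t trivial⟩

theorem hasDerivAt_phaseCurve (h : IsCR3BPSolution μ Set.univ x y z) (t : ℝ) :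
    HasDerivAt (phaseCurve x y z) (vectorField μ (phaseCurve x y z t)) t := by
  have hval : vectorField μ (phaseCurve x y z t) = (deriv x t, deriv y t, deriv z t,
      deriv (deriv x) t, deriv (deriv y) t, deriv (deriv z) t) := by
    simp only [vectorField, phaseCurve, h.eq_x t trivial, h.eq_y t trivial, h.eq_z t trivial]
  rw [hval]
  exact (h.diff_x t trivial).hasDerivAt.prodMk <| (h.diff_y t trivial).hasDerivAt.prodMk <|
    (h.diff_z t trivial).hasDerivAt.prodMk <| (h.diff_x' t trivial).hasDerivAt.prodMk <|
      (h.diff_y' t trivial).hasDerivAt.prodMk (h.diff_z' t trivial).hasDerivAt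

end IsCR3BPSolution

theorem cr3bp_mirror_theorem_general (μ : ℝ) (T : ℝ) (x y z : ℝ → ℝ)
    (h : IsCR3BPSolution μ Set.univ x y z)
    (hy0 : y 0 = 0) (hx'0 : deriv x 0 = 0) (hz'0 : deriv z 0 = 0)
    (hyT : y (T / 2) = 0) (hx'T : deriv x (T / 2) = 0) (hz'T : deriv z (T / 2) = 0) :
    ∀ t : ℝ,
      x (t + T) = x t ∧ y (t + T) = y t ∧ z (t + T) = z t ∧
      deriv x (t + T) = deriv x t ∧ deriv y (t + T) = deriv y t ∧
      deriv z (t + T) = deriv z t := by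
  have hfixed {c : ℝ} (hy : y c = 0) (hx' : deriv x c = 0) (hz' : deriv z c = 0) :
      mirror (phaseCurve x y z c) = phaseCurve x y z c := by
    simp [phaseCurve, hy, hx', hz']
  have hperiodic : Function.Periodic (phaseCurve x y z) T := by
    convert periodic_of_reflect_eq_of_reflect_eq mirror
      (fun _ => contDiffAt_vectorField μ) (vectorField_mirror μ) mirror_mirror
      h.hasDerivAt_phaseCurve h.phaseCurve_mem (hfixed hy0 hx'0 hz'0) (hfixed hyT hx'T hz'T)
      using 1
    ring
  intro t
  simpa [phaseCurve] using hperiodic t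

/-- **Mirror theorem for the CR3BP.** A CR3BP solution defined for all time that crosses
the x–z plane perpendicularly at `t = 0` and `t = T / 2` (with `T > 0`) is periodic with
period `T`, in both position and velocity. -/
theorem cr3bp_mirror_theorem (μ : ℝ) (hμ : μ ∈ Set.Ioo (0 : ℝ) 1)
    (T : ℝ) (hT : 0 < T) (x y z : ℝ → ℝ)
    (h : IsCR3BPSolution μ Set.univ x y z)
    (hy0 : y 0 = 0) (hx'0 : deriv x 0 = 0) (hz'0 : deriv z 0 = 0)
    (hyT : y (T / 2) = 0) (hx'T : deriv x (T / 2) = 0) (hz'T : deriv z (T / 2) = 0) :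
    ∀ t : ℝ,
      x (t + T) = x t ∧ y (t + T) = y t ∧ z (t + T) = z t ∧
      deriv x (t + T) = deriv x t ∧ deriv y (t + T) = deriv y t ∧
      deriv z (t + T) = deriv z t :=
  cr3bp_mirror_theorem_general μ T x y z h hy0 hx'0 hz'0 hyT hx'T hz'T
end

section
/- Collinear libration points of the CR3BP: for every μ ∈ (0,1), in each of the three open intervals (−∞, −μ), (−μ, 1−μ), and (1−μ, ∞) of the x-axis there exists exactly one x ∈ ℝ such that (x, 0, 0) is an equilibrium point of the CR3BP, i.e. the scalar equation x − (1−μ)(x+μ)/|x+μ|³ − μ(x−(1−μ))/|x−(1−μ)|³ = 0 has exactly one solution in each of these three intervals. -/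
/-- The scalar equilibrium equation of the CR3BP restricted to the x-axis, where
`r₁ = |x + μ|` and `r₂ = |x - (1 - μ)|`. Its zeros are the collinear libration points. -/
noncomputable def collinearEq (μ x : ℝ) : ℝ :=
  x - (1 - μ) * (x + μ) / |x + μ| ^ 3 - μ * (x - (1 - μ)) / |x - (1 - μ)| ^ 3

namespace CR3BPaux

lemma frac_pos (c t : ℝ) (ht : 0 < t) : c * t / |t| ^ 3 = c / t ^ 2 := by
  have ht' : t ≠ 0 := ne_of_gt ht
  rw [abs_of_pos ht, show t ^ 3 = t ^ 2 * t by ring, mul_div_mul_right _ _ ht']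

lemma frac_neg (c t : ℝ) (ht : t < 0) : c * t / |t| ^ 3 = -(c / t ^ 2) := by
  have ht' : t ≠ 0 := ne_of_lt ht
  rw [abs_of_neg ht, show (-t) ^ 3 = -(t ^ 2 * t) by ring, div_neg,
    mul_div_mul_right _ _ ht']

lemma eq_left {μ : ℝ} (x : ℝ) (h2 : x + μ < 0) (h3 : x - (1 - μ) < 0) :
    collinearEq μ x = x + (1-μ)/(x+μ)^2 + μ/(x-(1-μ))^2 := by
  unfold collinearEq
  rw [frac_neg _ _ h2, frac_neg _ _ h3]; ring

lemma eq_mid {μ : ℝ} (x : ℝ) (h2 : 0 < x + μ) (h3 : x - (1 - μ) < 0) :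
    collinearEq μ x = x - (1-μ)/(x+μ)^2 + μ/(x-(1-μ))^2 := by
  unfold collinearEq
  rw [frac_pos _ _ h2, frac_neg _ _ h3]; ring

lemma eq_right {μ : ℝ} (x : ℝ) (h2 : 0 < x + μ) (h3 : 0 < x - (1 - μ)) :
    collinearEq μ x = x - (1-μ)/(x+μ)^2 - μ/(x-(1-μ))^2 := by
  unfold collinearEq
  rw [frac_pos _ _ h2, frac_pos _ _ h3]

lemma contOn {μ : ℝ} (s : Set ℝ)
    (h : ∀ x ∈ s, x + μ ≠ 0 ∧ x - (1 - μ) ≠ 0) :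
    ContinuousOn (collinearEq μ) s := by
  unfold collinearEq
  apply ContinuousOn.sub
  apply ContinuousOn.sub continuousOn_id
  · exact ContinuousOn.div (by fun_prop) (by fun_prop)
      (fun x hx => pow_ne_zero _ (abs_ne_zero.mpr (h x hx).1))
  · exact ContinuousOn.div (by fun_prop) (by fun_prop)
      (fun x hx => pow_ne_zero _ (abs_ne_zero.mpr (h x hx).2))

lemma mono_left {μ : ℝ} (hμ0 : 0 < μ) (hμ1 : μ < 1) :
    StrictMonoOn (collinearEq μ) (Set.Iio (-μ)) := by
  intro x hx y hy hxy
  simp only [Set.mem_Iio] at hx hy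
  have hx2 : x + μ < 0 := by linarith
  have hx3 : x - (1-μ) < 0 := by linarith
  have hy2 : y + μ < 0 := by linarith
  have hy3 : y - (1-μ) < 0 := by linarith
  rw [eq_left x hx2 hx3, eq_left y hy2 hy3]
  have hA : (1-μ)/(x+μ)^2 ≤ (1-μ)/(y+μ)^2 := by
    apply div_le_div_of_nonneg_left (by linarith) (by nlinarith)
    nlinarith
  have hB : μ/(x-(1-μ))^2 ≤ μ/(y-(1-μ))^2 := by
    apply div_le_div_of_nonneg_left (le_of_lt hμ0) (by nlinarith)
    nlinarith
  linarith

lemma mono_mid {μ : ℝ} (hμ0 : 0 < μ) (hμ1 : μ < 1) :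
    StrictMonoOn (collinearEq μ) (Set.Ioo (-μ) (1-μ)) := by
  intro x hx y hy hxy
  obtain ⟨hx1, hx2'⟩ := hx
  obtain ⟨hy1, hy2'⟩ := hy
  have hx2 : 0 < x + μ := by linarith
  have hx3 : x - (1-μ) < 0 := by linarith
  have hy2 : 0 < y + μ := by linarith
  have hy3 : y - (1-μ) < 0 := by linarith
  rw [eq_mid x hx2 hx3, eq_mid y hy2 hy3]
  have hA : (1-μ)/(y+μ)^2 ≤ (1-μ)/(x+μ)^2 := by
    apply div_le_div_of_nonneg_left (by linarith) (by positivity)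
    nlinarith
  have hB : μ/(x-(1-μ))^2 ≤ μ/(y-(1-μ))^2 := by
    apply div_le_div_of_nonneg_left (le_of_lt hμ0) (by nlinarith)
    nlinarith
  linarith

lemma mono_right {μ : ℝ} (hμ0 : 0 < μ) (hμ1 : μ < 1) :
    StrictMonoOn (collinearEq μ) (Set.Ioi (1-μ)) := by
  intro x hx y hy hxy
  simp only [Set.mem_Ioi] at hx hy
  have hx2 : 0 < x + μ := by linarith
  have hx3 : 0 < x - (1-μ) := by linarith
  have hy2 : 0 < y + μ := by linarith
  have hy3 : 0 < y - (1-μ) := by linarith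
  rw [eq_right x hx2 hx3, eq_right y hy2 hy3]
  have hA : (1-μ)/(y+μ)^2 ≤ (1-μ)/(x+μ)^2 := by
    apply div_le_div_of_nonneg_left (by linarith) (by positivity)
    nlinarith
  have hB : μ/(y-(1-μ))^2 ≤ μ/(x-(1-μ))^2 := by
    apply div_le_div_of_nonneg_left (le_of_lt hμ0) (by positivity)
    nlinarith
  linarith

/-- existence via IVT on [a,b] ⊆ S -/
lemma exists_root {μ a b : ℝ} (hab : a < b)
    (hne : ∀ x ∈ Set.Icc a b, x + μ ≠ 0 ∧ x - (1 - μ) ≠ 0)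
    (hfa : collinearEq μ a < 0) (hfb : 0 < collinearEq μ b) :
    ∃ c ∈ Set.Ioo a b, collinearEq μ c = 0 := by
  have := intermediate_value_Icc (le_of_lt hab) (contOn _ hne)
  obtain ⟨c, hc, hfc⟩ := this ⟨le_of_lt hfa, le_of_lt hfb⟩
  refine ⟨c, ⟨lt_of_le_of_ne hc.1 ?_, lt_of_le_of_ne hc.2 ?_⟩, hfc⟩
  · rintro rfl; exact absurd hfc (ne_of_lt hfa)
  · rintro rfl; exact absurd hfc (ne_of_gt hfb)

end CR3BPaux

open CR3BPaux

/-- **Collinear libration points of the CR3BP.** For every `μ ∈ (0, 1)`, each of the three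
open intervals `(-∞, -μ)`, `(-μ, 1 - μ)` and `(1 - μ, ∞)` of the x-axis contains exactly
one solution of the collinear equilibrium equation. -/
theorem cr3bp_collinear_libration_points (μ : ℝ) (hμ : μ ∈ Set.Ioo (0 : ℝ) 1) :
    (∃! x : ℝ, x ∈ Set.Iio (-μ) ∧ collinearEq μ x = 0) ∧
    (∃! x : ℝ, x ∈ Set.Ioo (-μ) (1 - μ) ∧ collinearEq μ x = 0) ∧
    (∃! x : ℝ, x ∈ Set.Ioi (1 - μ) ∧ collinearEq μ x = 0) := by
  obtain ⟨hμ0, hμ1⟩ := hμ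
  refine ⟨?_, ?_, ?_⟩
  · -- L3 : interval (-∞, -μ), a = -2, b = -(1+μ)/2
    have hab : (-2 : ℝ) < -(1+μ)/2 := by linarith
    have hsub : Set.Icc (-2 : ℝ) (-(1+μ)/2) ⊆ Set.Iio (-μ) := by
      intro x hx
      simp only [Set.mem_Iio]
      have := hx.2
      linarith
    have hne : ∀ x ∈ Set.Icc (-2 : ℝ) (-(1+μ)/2), x + μ ≠ 0 ∧ x - (1 - μ) ≠ 0 := by
      intro x hx
      have h := hsub hx
      simp only [Set.mem_Iio] at h
      constructor <;> intro hcon <;> nlinarith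
    have hfa : collinearEq μ (-2) < 0 := by
      rw [eq_left (-2 : ℝ) (by linarith) (by linarith)]
      have h1 : (1-μ)/(-2+μ)^2 ≤ 1 := by
        rw [div_le_one (by nlinarith)]
        nlinarith
      have h2 : μ/(-2-(1-μ))^2 ≤ 1/4 := by
        rw [div_le_div_iff₀ (by nlinarith) (by norm_num)]
        nlinarith
      linarith
    have hfb : 0 < collinearEq μ (-(1+μ)/2) := by
      rw [eq_left (-(1+μ)/2) (by linarith) (by linarith)]
      have e1 : (-(1+μ)/2 + μ)^2 = (1-μ)^2/4 := by ring
      have h1 : (4 : ℝ) ≤ (1-μ)/(-(1+μ)/2+μ)^2 := by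
        rw [e1, le_div_iff₀ (by nlinarith)]
        nlinarith
      have h2 : 0 ≤ μ/(-(1+μ)/2-(1-μ))^2 := by positivity
      linarith
    obtain ⟨c, hc, hfc⟩ := exists_root hab hne hfa hfb
    refine ⟨c, ⟨hsub ⟨le_of_lt hc.1, le_of_lt hc.2⟩, hfc⟩, ?_⟩
    rintro y ⟨hy, hfy⟩
    exact (mono_left hμ0 hμ1).injOn hy (hsub ⟨le_of_lt hc.1, le_of_lt hc.2⟩)
      (hfy.trans hfc.symm)
  · -- L1 : interval (-μ, 1-μ), a = -μ + (1-μ)/4, b = 1 - μ - μ/4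
    set a := -μ + (1-μ)/4 with ha
    set b := 1 - μ - μ/4 with hb
    have hab : a < b := by rw [ha, hb]; linarith
    have hsub : Set.Icc a b ⊆ Set.Ioo (-μ) (1-μ) := by
      intro x hx
      constructor
      · have := hx.1; rw [ha] at this; linarith
      · have := hx.2; rw [hb] at this; linarith
    have hne : ∀ x ∈ Set.Icc a b, x + μ ≠ 0 ∧ x - (1 - μ) ≠ 0 := by
      intro x hx
      obtain ⟨h1, h2⟩ := hsub hx
      constructor <;> intro hcon <;> nlinarith
    have hfa : collinearEq μ a < 0 := by
      rw [eq_mid a (by rw [ha]; linarith) (by rw [ha]; linarith)]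
      have e1 : (a + μ)^2 = (1-μ)^2/16 := by rw [ha]; ring
      have e2 : (a - (1-μ))^2 = ((3+μ)/4)^2 := by rw [ha]; ring
      have h1 : (16 : ℝ) ≤ (1-μ)/(a+μ)^2 := by
        rw [e1, le_div_iff₀ (by nlinarith)]
        nlinarith
      have h2 : μ/(a-(1-μ))^2 ≤ 16/9 := by
        rw [e2, div_le_div_iff₀ (by nlinarith) (by norm_num)]
        nlinarith
      have h3 : a ≤ 1/4 := by rw [ha]; linarith
      linarith
    have hfb : 0 < collinearEq μ b := by
      rw [eq_mid b (by rw [hb]; linarith) (by rw [hb]; linarith)]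
      have e1 : (b - (1-μ))^2 = μ^2/16 := by rw [hb]; ring
      have e2 : (b + μ)^2 = (1 - μ/4)^2 := by rw [hb]; ring
      have h1 : (16 : ℝ) ≤ μ/(b-(1-μ))^2 := by
        rw [e1, le_div_iff₀ (by nlinarith)]
        nlinarith
      have h2 : (1-μ)/(b+μ)^2 ≤ 16/9 := by
        rw [e2, div_le_div_iff₀ (by nlinarith) (by norm_num)]
        nlinarith
      have h3 : -2 ≤ b := by rw [hb]; linarith
      linarith
    obtain ⟨c, hc, hfc⟩ := exists_root hab hne hfa hfb
    refine ⟨c, ⟨hsub ⟨le_of_lt hc.1, le_of_lt hc.2⟩, hfc⟩, ?_⟩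
    rintro y ⟨hy, hfy⟩
    exact (mono_mid hμ0 hμ1).injOn hy (hsub ⟨le_of_lt hc.1, le_of_lt hc.2⟩)
      (hfy.trans hfc.symm)
  · -- L2 : interval (1-μ, ∞), a = 1 - μ/2, b = 2
    have hab : (1 - μ/2 : ℝ) < 2 := by linarith
    have hsub : Set.Icc (1 - μ/2 : ℝ) 2 ⊆ Set.Ioi (1-μ) := by
      intro x hx
      simp only [Set.mem_Ioi]
      have := hx.1
      linarith
    have hne : ∀ x ∈ Set.Icc (1 - μ/2 : ℝ) 2, x + μ ≠ 0 ∧ x - (1 - μ) ≠ 0 := by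
      intro x hx
      have h := hsub hx
      simp only [Set.mem_Ioi] at h
      constructor <;> intro hcon <;> nlinarith
    have hfa : collinearEq μ (1 - μ/2) < 0 := by
      rw [eq_right (1 - μ/2 : ℝ) (by linarith) (by linarith)]
      have e1 : ((1 - μ/2 : ℝ) - (1-μ))^2 = μ^2/4 := by ring
      have h1 : (4 : ℝ) ≤ μ/((1-μ/2)-(1-μ))^2 := by
        rw [e1, le_div_iff₀ (by nlinarith)]
        nlinarith
      have h2 : 0 ≤ (1-μ)/((1-μ/2)+μ)^2 :=
        div_nonneg (by linarith) (by positivity)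
      linarith
    have hfb : 0 < collinearEq μ 2 := by
      rw [eq_right (2 : ℝ) (by linarith) (by linarith)]
      have h1 : (1-μ)/(2+μ)^2 ≤ 1/4 := by
        rw [div_le_div_iff₀ (by nlinarith) (by norm_num)]
        nlinarith
      have h2 : μ/(2-(1-μ))^2 ≤ 1 := by
        rw [div_le_one (by nlinarith)]
        nlinarith
      linarith
    obtain ⟨c, hc, hfc⟩ := exists_root hab hne hfa hfb
    refine ⟨c, ⟨hsub ⟨le_of_lt hc.1, le_of_lt hc.2⟩, hfc⟩, ?_⟩
    rintro y ⟨hy, hfy⟩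
    exact (mono_right hμ0 hμ1).injOn hy (hsub ⟨le_of_lt hc.1, le_of_lt hc.2⟩)
      (hfy.trans hfc.symm)
end

section
/- Classification of non-collinear equilibria of the CR3BP: for μ ∈ (0,1), if (x, y, z) is an equilibrium point of the CR3BP with y ≠ 0, then r₁ = r₂ = 1, z = 0, x = 1/2 − μ, and y = ±√3/2. Consequently, combined with the three collinear equilibria, the CR3BP has exactly five equilibrium (libration) points. -/
/-- `(x, y, z)` is an equilibrium (libration) point of the CR3BP with mass parameter `μ`:
the constant curve with zero velocity solves the equations of motion, away from the two
primaries. -/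
noncomputable def IsCR3BPEquilibrium (μ x y z : ℝ) : Prop :=
  0 < r1 μ x y z ∧ 0 < r2 μ x y z ∧
  x - (1 - μ) * (x + μ) / (r1 μ x y z) ^ 3
    - μ * (x - (1 - μ)) / (r2 μ x y z) ^ 3 = 0 ∧
  y - (1 - μ) * y / (r1 μ x y z) ^ 3 - μ * y / (r2 μ x y z) ^ 3 = 0 ∧
  (1 - μ) * z / (r1 μ x y z) ^ 3 + μ * z / (r2 μ x y z) ^ 3 = 0

namespace CR3BPAux

/-- The collinear equilibrium function. -/
noncomputable def fcol (μ x : ℝ) : ℝ :=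
  x - (1 - μ) * (x + μ) / |x + μ| ^ 3 - μ * (x - (1 - μ)) / |x - (1 - μ)| ^ 3

lemma r1_y0 (μ x : ℝ) : r1 μ x 0 0 = |x + μ| := by
  simp [r1, Real.sqrt_sq_eq_abs]

lemma r2_y0 (μ x : ℝ) : r2 μ x 0 0 = |x - (1 - μ)| := by
  simp [r2, Real.sqrt_sq_eq_abs]

lemma z_eq_zero {μ x y z : ℝ} (hμ0 : 0 < μ) (hμ1 : μ < 1)
    (h : IsCR3BPEquilibrium μ x y z) : z = 0 := by
  obtain ⟨h1, h2, _, _, h5⟩ := h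
  have hC : 0 < (1 - μ) / (r1 μ x y z) ^ 3 + μ / (r2 μ x y z) ^ 3 := by
    have : 0 < 1 - μ := by linarith
    positivity
  have hz : z * ((1 - μ) / (r1 μ x y z) ^ 3 + μ / (r2 μ x y z) ^ 3) = 0 := by
    linear_combination h5
  rcases mul_eq_zero.mp hz with h | h
  · exact h
  · exact absurd h (ne_of_gt hC)

/-- Part 1: classification of noncollinear equilibria. -/
lemma part1 {μ : ℝ} (hμ0 : 0 < μ) (hμ1 : μ < 1) (x y z : ℝ)
    (h : IsCR3BPEquilibrium μ x y z) (hy : y ≠ 0) :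
    r1 μ x y z = 1 ∧ r2 μ x y z = 1 ∧ z = 0 ∧ x = 1 / 2 - μ ∧
      (y = Real.sqrt 3 / 2 ∨ y = -(Real.sqrt 3 / 2)) := by
  have hz : z = 0 := z_eq_zero hμ0 hμ1 h
  obtain ⟨hR1, hR2, h1, h2, h3⟩ := h
  set R1 := r1 μ x y z with hR1def
  set R2 := r2 μ x y z with hR2def
  have hR1ne : R1 ≠ 0 := ne_of_gt hR1
  have hR2ne : R2 ≠ 0 := ne_of_gt hR2
  -- sum equation
  have hy2 : y * (1 - (1 - μ) / R1 ^ 3 - μ / R2 ^ 3) = 0 := by linear_combination h2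
  have hAB : (1 - μ) / R1 ^ 3 + μ / R2 ^ 3 = 1 := by
    rcases mul_eq_zero.mp hy2 with h | h
    · exact absurd h hy
    · linarith
  -- r1 = r2
  have hkey : μ * (1 - μ) / R1 ^ 3 = μ * (1 - μ) / R2 ^ 3 := by
    linear_combination -h1 - x * hAB
  have hcube : R1 ^ 3 = R2 ^ 3 := by
    have hm : 0 < μ * (1 - μ) := by nlinarith
    have hcross := (div_eq_div_iff (by positivity : (R1:ℝ) ^ 3 ≠ 0)
      (by positivity : (R2:ℝ) ^ 3 ≠ 0)).mp hkey
    have := mul_left_cancel₀ (ne_of_gt hm) hcross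
    linarith
  have hReq : R1 = R2 := by
    by_contra hne
    rcases lt_or_gt_of_ne hne with hlt | hlt
    · have := pow_lt_pow_left₀ hlt (le_of_lt hR1) (n := 3) (by norm_num)
      linarith
    · have := pow_lt_pow_left₀ hlt (le_of_lt hR2) (n := 3) (by norm_num)
      linarith
  have hR1one : R1 = 1 := by
    have h31 : R1 ^ 3 = 1 := by
      rw [hReq] at hAB
      have : (1 - μ + μ) / R2 ^ 3 = 1 := by
        rw [add_div]; linarith
      have h3 : R2 ^ 3 = 1 := by
        field_simp at this
        linarith
      rw [hReq]; exact h3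
    by_contra hne
    rcases lt_or_gt_of_ne hne with hlt | hlt
    · have := pow_lt_pow_left₀ hlt (le_of_lt hR1) (n := 3) (by norm_num)
      rw [one_pow] at this
      linarith
    · have := pow_lt_pow_left₀ hlt (by norm_num : (0:ℝ) ≤ 1) (n := 3) (by norm_num)
      rw [one_pow] at this
      linarith
  have hR2one : R2 = 1 := by rw [← hReq]; exact hR1one
  -- squares
  have hsq1 : (x + μ) ^ 2 + y ^ 2 + z ^ 2 = 1 := by
    have := hR1one
    rw [hR1def, r1, Real.sqrt_eq_one] at this
    exact this
  have hsq2 : (x - (1 - μ)) ^ 2 + y ^ 2 + z ^ 2 = 1 := by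
    have := hR2one
    rw [hR2def, r2, Real.sqrt_eq_one] at this
    exact this
  have hx : x = 1 / 2 - μ := by nlinarith [hsq1, hsq2]
  have hy2' : y ^ 2 = 3 / 4 := by
    rw [hx, hz] at hsq1; nlinarith [hsq1]
  have hs2 : (Real.sqrt 3 / 2) ^ 2 = 3 / 4 := by
    rw [div_pow, Real.sq_sqrt (by norm_num : (0:ℝ) ≤ 3)]; norm_num
  have hfact : (y - Real.sqrt 3 / 2) * (y + Real.sqrt 3 / 2) = 0 := by
    linear_combination hy2' - hs2
  refine ⟨hR1one, hR2one, hz, hx, ?_⟩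
  rcases mul_eq_zero.mp hfact with h | h
  · left; linarith
  · right; linarith

lemma equil_y0_iff (μ x : ℝ) :
    IsCR3BPEquilibrium μ x 0 0 ↔ x + μ ≠ 0 ∧ x - (1 - μ) ≠ 0 ∧ fcol μ x = 0 := by
  unfold IsCR3BPEquilibrium fcol
  rw [r1_y0, r2_y0]
  constructor
  · rintro ⟨h1, h2, h3, -, -⟩
    exact ⟨abs_pos.mp h1, abs_pos.mp h2, h3⟩
  · rintro ⟨h1, h2, h3⟩
    exact ⟨abs_pos.mpr h1, abs_pos.mpr h2, h3, by ring, by ring⟩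

/- Region formulas -/
lemma fcol_eq1 {μ x : ℝ} (h1 : x + μ < 0) :
    fcol μ x = x + (1 - μ) / (x + μ) ^ 2 + μ / (x - (1 - μ)) ^ 2 := by
  have h2 : x - (1 - μ) < 0 := by linarith
  have h1' : x + μ ≠ 0 := ne_of_lt h1
  have h2' : x - (1 - μ) ≠ 0 := ne_of_lt h2
  have e1 : (-(x + μ)) ^ 3 = -((x + μ) ^ 3) := by ring
  have e2 : (-(x - (1 - μ))) ^ 3 = -((x - (1 - μ)) ^ 3) := by ring
  rw [fcol, abs_of_neg h1, abs_of_neg h2, e1, e2, div_neg, div_neg]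
  field_simp
  ring

lemma fcol_eq2 {μ x : ℝ} (h1 : 0 < x + μ) (h2 : x - (1 - μ) < 0) :
    fcol μ x = x - (1 - μ) / (x + μ) ^ 2 + μ / (x - (1 - μ)) ^ 2 := by
  have h1' : x + μ ≠ 0 := ne_of_gt h1
  have h2' : x - (1 - μ) ≠ 0 := ne_of_lt h2
  have e2 : (-(x - (1 - μ))) ^ 3 = -((x - (1 - μ)) ^ 3) := by ring
  rw [fcol, abs_of_pos h1, abs_of_neg h2, e2, div_neg]
  field_simp
  ring

lemma fcol_eq3 {μ x : ℝ} (h2 : 0 < x - (1 - μ)) (hμ1 : μ ≤ 1) :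
    fcol μ x = x - (1 - μ) / (x + μ) ^ 2 - μ / (x - (1 - μ)) ^ 2 := by
  have h1 : 0 < x + μ := by linarith
  rw [fcol, abs_of_pos h1, abs_of_pos h2]
  have h1' : x + μ ≠ 0 := ne_of_gt h1
  have h2' : x - (1 - μ) ≠ 0 := ne_of_gt h2
  field_simp

/- Strict monotonicity on each region -/
lemma mono1 {μ : ℝ} (hμ0 : 0 < μ) (hμ1 : μ < 1) :
    StrictMonoOn (fcol μ) (Set.Iio (-μ)) := by
  intro a ha b hb hab
  simp only [Set.mem_Iio] at ha hb
  have ha1 : a + μ < 0 := by linarith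
  have hb1 : b + μ < 0 := by linarith
  have ha2 : a - (1 - μ) < 0 := by linarith
  have hb2 : b - (1 - μ) < 0 := by linarith
  rw [fcol_eq1 ha1, fcol_eq1 hb1]
  have k1 : (1 - μ) / (a + μ) ^ 2 < (1 - μ) / (b + μ) ^ 2 :=
    div_lt_div_of_pos_left (by linarith) (by nlinarith) (by nlinarith)
  have k2 : μ / (a - (1 - μ)) ^ 2 < μ / (b - (1 - μ)) ^ 2 :=
    div_lt_div_of_pos_left hμ0 (by nlinarith) (by nlinarith)
  linarith

lemma mono2 {μ : ℝ} (hμ0 : 0 < μ) (hμ1 : μ < 1) :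
    StrictMonoOn (fcol μ) (Set.Ioo (-μ) (1 - μ)) := by
  intro a ha b hb hab
  obtain ⟨ha1, ha2⟩ := ha
  obtain ⟨hb1, hb2⟩ := hb
  have ha1' : 0 < a + μ := by linarith
  have hb1' : 0 < b + μ := by linarith
  have ha2' : a - (1 - μ) < 0 := by linarith
  have hb2' : b - (1 - μ) < 0 := by linarith
  rw [fcol_eq2 ha1' ha2', fcol_eq2 hb1' hb2']
  have k1 : (1 - μ) / (b + μ) ^ 2 < (1 - μ) / (a + μ) ^ 2 :=
    div_lt_div_of_pos_left (by linarith) (by nlinarith) (by nlinarith)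
  have k2 : μ / (a - (1 - μ)) ^ 2 < μ / (b - (1 - μ)) ^ 2 :=
    div_lt_div_of_pos_left hμ0 (by nlinarith) (by nlinarith)
  linarith

lemma mono3 {μ : ℝ} (hμ0 : 0 < μ) (hμ1 : μ < 1) :
    StrictMonoOn (fcol μ) (Set.Ioi (1 - μ)) := by
  intro a ha b hb hab
  simp only [Set.mem_Ioi] at ha hb
  have ha1 : 0 < a + μ := by linarith
  have hb1 : 0 < b + μ := by linarith
  have ha2 : 0 < a - (1 - μ) := by linarith
  have hb2 : 0 < b - (1 - μ) := by linarith
  rw [fcol_eq3 ha2 (le_of_lt hμ1), fcol_eq3 hb2 (le_of_lt hμ1)]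
  have k1 : (1 - μ) / (b + μ) ^ 2 < (1 - μ) / (a + μ) ^ 2 :=
    div_lt_div_of_pos_left (by linarith) (by nlinarith) (by nlinarith)
  have k2 : μ / (b - (1 - μ)) ^ 2 < μ / (a - (1 - μ)) ^ 2 :=
    div_lt_div_of_pos_left hμ0 (by nlinarith) (by nlinarith)
  linarith

/- Continuity away from the primaries -/
lemma fcol_contOn (μ : ℝ) :
    ContinuousOn (fcol μ) {x : ℝ | x + μ ≠ 0 ∧ x - (1 - μ) ≠ 0} := by
  unfold fcol
  apply ContinuousOn.sub
  apply ContinuousOn.sub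
  · exact continuousOn_id
  · apply ContinuousOn.div
    · fun_prop
    · fun_prop
    · intro x hx
      exact pow_ne_zero _ (abs_ne_zero.mpr hx.1)
  · apply ContinuousOn.div
    · fun_prop
    · fun_prop
    · intro x hx
      exact pow_ne_zero _ (abs_ne_zero.mpr hx.2)

/- Roots via IVT -/
lemma exists_root {μ a b : ℝ} (hab : a ≤ b)
    (hsub : Set.Icc a b ⊆ {x : ℝ | x + μ ≠ 0 ∧ x - (1 - μ) ≠ 0})
    (hfa : fcol μ a ≤ 0) (hfb : 0 ≤ fcol μ b) :
    ∃ x ∈ Set.Icc a b, fcol μ x = 0 := by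
  have := intermediate_value_Icc hab ((fcol_contOn μ).mono hsub)
  have h0 : (0:ℝ) ∈ Set.Icc (fcol μ a) (fcol μ b) := ⟨hfa, hfb⟩
  obtain ⟨x, hx, hfx⟩ := this h0
  exact ⟨x, hx, hfx⟩

lemma root1 {μ : ℝ} (hμ0 : 0 < μ) (hμ1 : μ < 1) :
    ∃ x ∈ Set.Iio (-μ), fcol μ x = 0 := by
  have hb : -(1 + μ) / 2 < -μ := by linarith
  have hab : (-3 : ℝ) ≤ -(1 + μ) / 2 := by linarith
  have hsub : Set.Icc (-3 : ℝ) (-(1 + μ) / 2) ⊆ {x : ℝ | x + μ ≠ 0 ∧ x - (1 - μ) ≠ 0} := by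
    intro x hx
    obtain ⟨hx1, hx2⟩ := hx
    constructor
    · intro h; nlinarith
    · intro h; nlinarith
  have hfa : fcol μ (-3) ≤ 0 := by
    rw [fcol_eq1 (by linarith : (-3 : ℝ) + μ < 0)]
    have d1 : (0:ℝ) < ((-3 : ℝ) + μ) ^ 2 := by nlinarith
    have d2 : (0:ℝ) < ((-3 : ℝ) - (1 - μ)) ^ 2 := by nlinarith
    have k1 : (1 - μ) / ((-3 : ℝ) + μ) ^ 2 ≤ 1 / 4 := by
      rw [div_le_div_iff₀ d1 (by norm_num)]
      nlinarith
    have k2 : μ / ((-3 : ℝ) - (1 - μ)) ^ 2 ≤ 1 / 9 := by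
      rw [div_le_div_iff₀ d2 (by norm_num)]
      nlinarith
    linarith
  have hfb : 0 ≤ fcol μ (-(1 + μ) / 2) := by
    rw [fcol_eq1 (by linarith : -(1 + μ) / 2 + μ < 0)]
    have d1 : (0:ℝ) < (-(1 + μ) / 2 + μ) ^ 2 := by nlinarith
    have d2 : (0:ℝ) < (-(1 + μ) / 2 - (1 - μ)) ^ 2 := by nlinarith
    have k1 : (4:ℝ) ≤ (1 - μ) / (-(1 + μ) / 2 + μ) ^ 2 := by
      rw [le_div_iff₀ d1]
      nlinarith
    have k2 : (0:ℝ) ≤ μ / (-(1 + μ) / 2 - (1 - μ)) ^ 2 := div_nonneg (by linarith) (by nlinarith)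
    linarith
  obtain ⟨x, hx, hfx⟩ := exists_root hab hsub hfa hfb
  exact ⟨x, by simp only [Set.mem_Iio]; linarith [hx.2], hfx⟩

lemma root2 {μ : ℝ} (hμ0 : 0 < μ) (hμ1 : μ < 1) :
    ∃ x ∈ Set.Ioo (-μ) (1 - μ), fcol μ x = 0 := by
  set a := (1 - 3 * μ) / 2 with hadef
  set b := (2 - 3 * μ) / 2 with hbdef
  have haI : -μ < a := by rw [hadef]; linarith
  have hbI : b < 1 - μ := by rw [hbdef]; linarith
  have hab : a ≤ b := by rw [hadef, hbdef]; linarith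
  have hsub : Set.Icc a b ⊆ {x : ℝ | x + μ ≠ 0 ∧ x - (1 - μ) ≠ 0} := by
    intro x hx
    obtain ⟨hx1, hx2⟩ := hx
    constructor
    · intro h; nlinarith
    · intro h; nlinarith
  have hfa : fcol μ a ≤ 0 := by
    have h1 : 0 < a + μ := by linarith
    have h2 : a - (1 - μ) < 0 := by rw [hadef]; linarith
    rw [fcol_eq2 h1 h2]
    have k1 : (4:ℝ) ≤ (1 - μ) / (a + μ) ^ 2 := by
      rw [le_div_iff₀ (by nlinarith)]
      rw [hadef]
      nlinarith
    have k2 : μ / (a - (1 - μ)) ^ 2 ≤ 1 := by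
      rw [div_le_one (by nlinarith)]
      rw [hadef]
      nlinarith
    have ha2 : a ≤ 1 / 2 := by rw [hadef]; linarith
    linarith
  have hfb : 0 ≤ fcol μ b := by
    have h1 : 0 < b + μ := by linarith
    have h2 : b - (1 - μ) < 0 := by rw [hbdef]; linarith
    rw [fcol_eq2 h1 h2]
    have k1 : (1 - μ) / (b + μ) ^ 2 ≤ 1 := by
      rw [div_le_one (by nlinarith)]
      rw [hbdef]
      nlinarith
    have k2 : (4:ℝ) ≤ μ / (b - (1 - μ)) ^ 2 := by
      rw [le_div_iff₀ (by nlinarith)]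
      rw [hbdef]
      nlinarith
    have hb2 : -1 / 2 ≤ b := by rw [hbdef]; linarith
    linarith
  obtain ⟨x, hx, hfx⟩ := exists_root hab hsub hfa hfb
  exact ⟨x, ⟨by linarith [hx.1], by linarith [hx.2]⟩, hfx⟩

lemma root3 {μ : ℝ} (hμ0 : 0 < μ) (hμ1 : μ < 1) :
    ∃ x ∈ Set.Ioi (1 - μ), fcol μ x = 0 := by
  set a := (2 - μ) / 2 with hadef
  have haI : 1 - μ < a := by rw [hadef]; linarith
  have hab : a ≤ 3 := by rw [hadef]; linarith
  have hsub : Set.Icc a (3:ℝ) ⊆ {x : ℝ | x + μ ≠ 0 ∧ x - (1 - μ) ≠ 0} := by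
    intro x hx
    obtain ⟨hx1, hx2⟩ := hx
    constructor
    · intro h; nlinarith
    · intro h; nlinarith
  have hfa : fcol μ a ≤ 0 := by
    have h2 : 0 < a - (1 - μ) := by linarith
    rw [fcol_eq3 h2 (le_of_lt hμ1)]
    have h1 : 0 < a + μ := by linarith
    have k1 : (0:ℝ) ≤ (1 - μ) / (a + μ) ^ 2 := div_nonneg (by linarith) (by nlinarith)
    have k2 : (4:ℝ) ≤ μ / (a - (1 - μ)) ^ 2 := by
      rw [le_div_iff₀ (by nlinarith)]
      rw [hadef]
      nlinarith
    have ha2 : a ≤ 1 := by rw [hadef]; linarith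
    linarith
  have hfb : 0 ≤ fcol μ 3 := by
    have h2 : 0 < (3:ℝ) - (1 - μ) := by linarith
    rw [fcol_eq3 h2 (le_of_lt hμ1)]
    have d1 : (0:ℝ) < ((3:ℝ) + μ) ^ 2 := by nlinarith
    have d2 : (0:ℝ) < ((3:ℝ) - (1 - μ)) ^ 2 := by nlinarith
    have k1 : (1 - μ) / ((3:ℝ) + μ) ^ 2 ≤ 1 / 9 := by
      rw [div_le_div_iff₀ d1 (by norm_num)]
      nlinarith
    have k2 : μ / ((3:ℝ) - (1 - μ)) ^ 2 ≤ 1 / 4 := by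
      rw [div_le_div_iff₀ d2 (by norm_num)]
      nlinarith
    linarith
  obtain ⟨x, hx, hfx⟩ := exists_root hab hsub hfa hfb
  exact ⟨x, by simp only [Set.mem_Ioi]; linarith [hx.1], hfx⟩

/-- Triangular points are equilibria. -/
lemma tri_equil {μ : ℝ} (hμ0 : 0 < μ) (hμ1 : μ < 1) (y : ℝ) (hy2 : y ^ 2 = 3 / 4) :
    IsCR3BPEquilibrium μ (1 / 2 - μ) y 0 := by
  have hr1 : r1 μ (1 / 2 - μ) y 0 = 1 := by
    rw [r1, show (1 / 2 - μ + μ) ^ 2 + y ^ 2 + (0:ℝ) ^ 2 = 1 by linear_combination hy2]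
    exact Real.sqrt_one
  have hr2 : r2 μ (1 / 2 - μ) y 0 = 1 := by
    rw [r2, show (1 / 2 - μ - (1 - μ)) ^ 2 + y ^ 2 + (0:ℝ) ^ 2 = 1 by linear_combination hy2]
    exact Real.sqrt_one
  refine ⟨by rw [hr1]; norm_num, by rw [hr2]; norm_num, ?_, ?_, ?_⟩ <;>
    rw [hr1, hr2] <;> ring

end CR3BPAux

open CR3BPAux in
/-- **Classification of non-collinear CR3BP equilibria.** For `μ ∈ (0, 1)`, any
equilibrium point with `y ≠ 0` satisfies `r₁ = r₂ = 1`, `z = 0`, `x = 1/2 - μ`, and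
`y = ±√3/2`. Consequently, together with the three collinear equilibria, the CR3BP has
exactly five equilibrium (libration) points. -/
theorem cr3bp_noncollinear_equilibria (μ : ℝ) (hμ : μ ∈ Set.Ioo (0 : ℝ) 1) :
    (∀ x y z : ℝ, IsCR3BPEquilibrium μ x y z → y ≠ 0 →
      r1 μ x y z = 1 ∧ r2 μ x y z = 1 ∧ z = 0 ∧ x = 1 / 2 - μ ∧
        (y = Real.sqrt 3 / 2 ∨ y = -(Real.sqrt 3 / 2))) ∧
    {p : ℝ × ℝ × ℝ | IsCR3BPEquilibrium μ p.1 p.2.1 p.2.2}.encard = 5 := by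
  obtain ⟨hμ0, hμ1⟩ := hμ
  refine ⟨fun x y z h hy => part1 hμ0 hμ1 x y z h hy, ?_⟩
  obtain ⟨x1, hx1S, hx1⟩ := root1 hμ0 hμ1
  obtain ⟨x2, hx2S, hx2⟩ := root2 hμ0 hμ1
  obtain ⟨x3, hx3S, hx3⟩ := root3 hμ0 hμ1
  simp only [Set.mem_Iio] at hx1S
  obtain ⟨hx2a, hx2b⟩ := hx2S
  simp only [Set.mem_Ioi] at hx3S
  set c : ℝ := 1 / 2 - μ with hcdef
  set s : ℝ := Real.sqrt 3 / 2 with hsdef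
  have hspos : 0 < s := by
    rw [hsdef]
    positivity
  have hs2 : s ^ 2 = 3 / 4 := by
    rw [hsdef, div_pow, Real.sq_sqrt (by norm_num : (0:ℝ) ≤ 3)]; norm_num
  have hns2 : (-s) ^ 2 = 3 / 4 := by rw [neg_pow]; simp [hs2]
  have hset : {p : ℝ × ℝ × ℝ | IsCR3BPEquilibrium μ p.1 p.2.1 p.2.2} =
      {(x1, 0, 0), (x2, 0, 0), (x3, 0, 0), (c, s, 0), (c, -s, 0)} := by
    ext ⟨x, y, z⟩
    simp only [Set.mem_setOf_eq, Set.mem_insert_iff, Set.mem_singleton_iff, Prod.mk.injEq]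
    constructor
    · intro h
      have hz : z = 0 := z_eq_zero hμ0 hμ1 h
      by_cases hy : y = 0
      · subst hy hz
        have := (equil_y0_iff μ x).mp h
        obtain ⟨hne1, hne2, hf⟩ := this
        rcases lt_trichotomy x (-μ) with hlt | heq | hgt
        · left
          refine ⟨?_, rfl, rfl⟩
          exact (mono1 hμ0 hμ1).injOn hlt hx1S (by rw [hf, hx1])
        · exact absurd (by rw [heq]; ring) hne1
        · rcases lt_trichotomy x (1 - μ) with hlt2 | heq2 | hgt2
          · right; left
            refine ⟨?_, rfl, rfl⟩
            exact (mono2 hμ0 hμ1).injOn ⟨hgt, hlt2⟩ ⟨hx2a, hx2b⟩ (by rw [hf, hx2])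
          · exact absurd (by rw [heq2]; ring) hne2
          · right; right; left
            refine ⟨?_, rfl, rfl⟩
            exact (mono3 hμ0 hμ1).injOn hgt2 hx3S (by rw [hf, hx3])
      · obtain ⟨_, _, hz', hxc, hyval⟩ := part1 hμ0 hμ1 x y z h hy
        rcases hyval with hv | hv
        · right; right; right; left; exact ⟨hxc, hv, hz'⟩
        · right; right; right; right; exact ⟨hxc, hv, hz'⟩
    · rintro (⟨rfl, rfl, rfl⟩ | ⟨rfl, rfl, rfl⟩ | ⟨rfl, rfl, rfl⟩ | ⟨rfl, rfl, rfl⟩ | ⟨rfl, rfl, rfl⟩)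
      · exact (equil_y0_iff μ _).mpr ⟨by intro h; linarith, by intro h; linarith, hx1⟩
      · exact (equil_y0_iff μ _).mpr ⟨by intro h; linarith, by intro h; linarith, hx2⟩
      · exact (equil_y0_iff μ _).mpr ⟨by intro h; linarith, by intro h; linarith, hx3⟩
      · exact tri_equil hμ0 hμ1 s hs2
      · exact tri_equil hμ0 hμ1 (-s) hns2
  rw [hset]
  have h12 : x1 ≠ x2 := by intro h; rw [h] at hx1S; linarith
  have h13 : x1 ≠ x3 := by intro h; rw [h] at hx1S; linarith
  have h23 : x2 ≠ x3 := by intro h; rw [h] at hx2b; linarith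
  have hsne : s ≠ 0 := ne_of_gt hspos
  have hnsne : -s ≠ 0 := neg_ne_zero.mpr hsne
  have hsns : s ≠ -s := by intro h; linarith
  have hn1 : ((x1, (0:ℝ), (0:ℝ)) : ℝ × ℝ × ℝ) ∉
      ({(x2, 0, 0), (x3, 0, 0), (c, s, 0), (c, -s, 0)} : Set (ℝ × ℝ × ℝ)) := by
    simp only [Set.mem_insert_iff, Set.mem_singleton_iff, Prod.mk.injEq, not_or]
    refine ⟨?_, ?_, ?_, ?_⟩ <;> rintro ⟨h, h', -⟩
    exacts [h12 h, h13 h, hsne h'.symm, hnsne h'.symm]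
  have hn2 : ((x2, (0:ℝ), (0:ℝ)) : ℝ × ℝ × ℝ) ∉
      ({(x3, 0, 0), (c, s, 0), (c, -s, 0)} : Set (ℝ × ℝ × ℝ)) := by
    simp only [Set.mem_insert_iff, Set.mem_singleton_iff, Prod.mk.injEq, not_or]
    refine ⟨?_, ?_, ?_⟩ <;> rintro ⟨h, h', -⟩
    exacts [h23 h, hsne h'.symm, hnsne h'.symm]
  have hn3 : ((x3, (0:ℝ), (0:ℝ)) : ℝ × ℝ × ℝ) ∉
      ({(c, s, 0), (c, -s, 0)} : Set (ℝ × ℝ × ℝ)) := by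
    simp only [Set.mem_insert_iff, Set.mem_singleton_iff, Prod.mk.injEq, not_or]
    refine ⟨?_, ?_⟩ <;> rintro ⟨h, h', -⟩
    exacts [hsne h'.symm, hnsne h'.symm]
  have hn4 : ((c, s, (0:ℝ)) : ℝ × ℝ × ℝ) ∉ ({(c, -s, 0)} : Set (ℝ × ℝ × ℝ)) := by
    simp only [Set.mem_singleton_iff, Prod.mk.injEq]
    rintro ⟨-, h, -⟩
    exact hsns h
  rw [Set.encard_insert_of_notMem hn1, Set.encard_insert_of_notMem hn2,
    Set.encard_insert_of_notMem hn3, Set.encard_insert_of_notMem hn4,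
    Set.encard_singleton]
  rfl
end
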